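/- The bivariate q-Hermite polynomials defined by H_{n+1}(x,s,q) = x H_n(x,s,q) - (1-q^n) s H_{n-1}(x,s,q), H_0 = 1, H_1 = x, satisfy H_n(x + (1-q)s D_q, s, q) 1 = x^n, i.e., substituting the operator x + (1-q)s D_q for x in H_n and applying to the constant polynomial 1 yields x^n. -/

import Mathlib

open Finset

/-- The q-analogue `[n]_q = (1-q^n)/(1-q)`. -/
noncomputable def qNum {F : Type*} [Field F] (q : F) (n : ℕ) : F := (1 - q ^ n) / (1 - q)

/-- The q-factorial `[n]_q! = [1]_q [2]_q ⋯ [n]_q`. -/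
noncomputable def qFact {F : Type*} [Field F] (q : F) (n : ℕ) : F :=
  ∏ j ∈ Finset.Icc 1 n, qNum q j

/-- The q-binomial (Gaussian) coefficient `[n choose k]_q = [n]_q!/([k]_q! [n-k]_q!)`,
zero when `k > n`. -/
noncomputable def qBinom {F : Type*} [Field F] (q : F) (n k : ℕ) : F :=
  if k ≤ n then qFact q n / (qFact q k * qFact q (n - k)) else 0

/-- The q-differentiation operator on polynomials, `D_q x^n = [n]_q x^{n-1}`. -/
noncomputable def Dq {F : Type*} [Field F] (q : F) (p : Polynomial F) : Polynomial F :=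
  Polynomial.C (1 / (1 - q)) * (p - p.comp (Polynomial.C q * Polynomial.X)).divX

/-- The bivariate q-Hermite polynomials: `H_0 = 1`, `H_1 = x`,
`H_{n+1} = x H_n - (1-qⁿ) s H_{n-1}`. -/
noncomputable def qHermite {F : Type*} [Field F] (q s : F) : ℕ → Polynomial F
  | 0 => 1
  | 1 => Polynomial.X
  | (n + 2) => Polynomial.X * qHermite q s (n + 1) -
      Polynomial.C ((1 - q ^ (n + 1)) * s) * qHermite q s n

/-- The operator `x + (1-q) s D_q` (multiplication by `x` plus `(1-q)s` times
q-differentiation). -/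
noncomputable def qHermiteOp {F : Type*} [Field F] (q s : F) (p : Polynomial F) : Polynomial F :=
  Polynomial.X * p + Polynomial.C ((1 - q) * s) * Dq q p

/-! Since `H_{n+2} = x H_{n+1} - (1-q^{n+1}) s H_n`, substituting the linear operator
`T = x + (1-q) s D_q` and applying to `1` turns the claim into the two-step recursion
`T x^{n+1} - (1-q^{n+1}) s x^n = x^{n+2}`, which is `D_q x^{n+1} = [n+1]_q x^n`. -/

open Polynomial

section

variable {F : Type*} [Field F]

/-- This holds also at `q = 1`, where `Dq` carries the junk factor `1 / 0 = 0`: there both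
sides vanish. -/
lemma C_one_sub_mul_Dq (q : F) (p : F[X]) :
    C (1 - q) * Dq q p = (p - p.comp (C q * X)).divX := by
  by_cases hq : q = 1
  · subst hq
    simp
  · rw [Dq, ← mul_assoc, ← C_mul, mul_one_div_cancel (sub_ne_zero_of_ne (Ne.symm hq)), C_1,
      one_mul]

lemma qHermiteOp_eq (q s : F) (p : F[X]) :
    qHermiteOp q s p = X * p + C s * (p - p.comp (C q * X)).divX := by
  rw [qHermiteOp, C_mul, mul_comm (C (1 - q)), mul_assoc, C_one_sub_mul_Dq]

noncomputable def qHermiteOpₗ (q s : F) : Module.End F F[X] where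
  toFun := qHermiteOp q s
  map_add' p r := by
    simp only [qHermiteOp_eq, add_comp, add_sub_add_comm, divX_add]
    ring
  map_smul' c p := by
    simp only [qHermiteOp_eq, smul_eq_C_mul, mul_comp, C_comp, ← mul_sub, divX_C_mul,
      RingHom.id_apply]
    ring

@[simp]
lemma coe_qHermiteOpₗ (q s : F) : ⇑(qHermiteOpₗ q s) = qHermiteOp q s := rfl

lemma qHermiteOp_one (q s : F) : qHermiteOp q s 1 = X := by
  simp [qHermiteOp_eq]

lemma qHermiteOp_X_pow_succ (q s : F) (n : ℕ) :
    qHermiteOp q s (X ^ (n + 1)) = X ^ (n + 2) + C ((1 - q ^ (n + 1)) * s) * X ^ n := by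
  have hdiff : (X ^ (n + 1) : F[X]) - (X ^ (n + 1)).comp (C q * X) =
      C (1 - q ^ (n + 1)) * X ^ (n + 1) := by
    rw [pow_comp, X_comp, mul_pow, ← C_pow, C_sub, C_1, sub_mul, one_mul]
  rw [qHermiteOp_eq, hdiff, divX_C_mul, divX_X_pow, if_neg n.succ_ne_zero, Nat.add_sub_cancel,
    C_mul]
  ring

lemma aeval_qHermite_qHermiteOpₗ_one (q s : F) (n : ℕ) :
    aeval (qHermiteOpₗ q s) (qHermite q s n) 1 = X ^ n := by
  induction n using Nat.twoStepInduction with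
  | zero => simp [qHermite]
  | one => simp [qHermite, qHermiteOp_one]
  | more n ih₀ ih₁ =>
    rw [qHermite, map_sub, map_mul, map_mul, aeval_X, aeval_C, LinearMap.sub_apply,
      Module.End.mul_apply, Module.End.mul_apply, ih₀, ih₁, Module.algebraMap_end_apply,
      coe_qHermiteOpₗ, qHermiteOp_X_pow_succ, smul_eq_C_mul, add_sub_cancel_right]

end

theorem qHermite_op_umbral_general {F : Type*} [Field F] (q s : F) (n : ℕ) :
    ((qHermite q s n).sum fun k a => a • ((qHermiteOp q s)^[k] (1 : Polynomial F))) =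
      Polynomial.X ^ n := by
  rw [← aeval_qHermite_qHermiteOpₗ_one q s n, aeval_endomorphism]
  simp only [Module.End.coe_pow, coe_qHermiteOpₗ]

/-- `H_n(x + (1-q) s D_q, s, q) 1 = xⁿ`: substituting the operator `x + (1-q)s D_q`
for `x` in `H_n(x,s,q) = Σ_k h(n,k) x^k` (i.e. applying `Σ_k h(n,k) (x+(1-q)sD_q)^k`
to the constant polynomial 1) yields `xⁿ`. -/
theorem qHermite_op_umbral {F : Type*} [Field F] (q s : F) (hq : q ≠ 1) (n : ℕ) :
    ((qHermite q s n).sum fun k a => a • ((qHermiteOp q s)^[k] (1 : Polynomial F))) =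
      Polynomial.X ^ n :=
  qHermite_op_umbral_general q s n
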